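/- Fix an integer g ≥ 2, set L = cos(π/(g+1)), for c > 0 let s(c) = 2·arsinh(L/sinh(c/2)), and let c₁ > 0 be the unique solution of cosh(c₁) = 2L² + cosh(s(c₁)). Then for every c ≥ c₁ there exists a unique u ∈ (0,1] such that ℓ_β(c, c·u) = 2c. -/

import Mathlib

/-! By the addition formulas the argument of the `arcosh` in `ℓ_β(c, t)` equals
`(cosh c · (cosh s − 1) + cosh (c − t) · (cosh s + 1)) / 2`, so `ℓ_β(c, t) = 2c` exactly when
`cosh (c − t) = R(c) := cosh c · (3 − cosh s) / (cosh s + 1)`. As `L ≠ 0` we have `R(c) < cosh c`.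
With `x = cosh c − 1`, the seam relation `(cosh s − 1) · x = 4L²` turns `1 ≤ R(c)` into
`x² − 2L²x − 4L² ≥ 0`, and the defining equation of `c₁` says that `cosh c₁ − 1` is the positive
root of this quadratic. Hence for `c ≥ c₁` the equation forces `c − t = arcosh R(c) ∈ [0, c)`,
which determines `u = t / c ∈ (0, 1]`. -/

/-- Inverse hyperbolic cosine (for `x ≥ 1`). -/
noncomputable def arcosh (x : ℝ) : ℝ := Real.log (x + Real.sqrt (x ^ 2 - 1))

/-- The seam length `s(c) = 2·arsinh(L / sinh(c/2))`, so that
`sinh(c/2)·sinh(s(c)/2) = L`. -/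
noncomputable def seam (L c : ℝ) : ℝ := 2 * Real.arsinh (L / Real.sinh (c / 2))

/-- The length
`ℓ_β(c,t) = 2·arcosh(cosh(s(c))·cosh(t/2)·cosh(c−t/2) − sinh(t/2)·sinh(c−t/2))`. -/
noncomputable def ellBeta (L c t : ℝ) : ℝ :=
  2 * arcosh (Real.cosh (seam L c) * Real.cosh (t / 2) * Real.cosh (c - t / 2)
      - Real.sinh (t / 2) * Real.sinh (c - t / 2))

open Real hiding arcosh
open Set

lemma arcosh_eq_real_arcosh : arcosh = Real.arcosh := rfl

lemma arcosh_eq_iff {x y : ℝ} (hx : 1 ≤ x) (hy : 0 ≤ y) : arcosh x = y ↔ x = cosh y := by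
  rw [arcosh_eq_real_arcosh]
  constructor
  · rintro rfl
    exact (cosh_arcosh hx).symm
  · rintro rfl
    exact arcosh_cosh hy

lemma cosh_seam_sub_one_mul (L : ℝ) {c : ℝ} (hc : c ≠ 0) :
    (cosh (seam L c) - 1) * (cosh c - 1) = 4 * L ^ 2 := by
  have hsinh : sinh (c / 2) ≠ 0 := sinh_ne_zero.2 (div_ne_zero hc two_ne_zero)
  have hseam : cosh (seam L c) = 2 * (L / sinh (c / 2)) ^ 2 + 1 := by
    rw [seam, cosh_two_mul, cosh_sq, sinh_arsinh]
    ring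
  have hcosh : cosh c = 2 * sinh (c / 2) ^ 2 + 1 := by
    calc cosh c = cosh (2 * (c / 2)) := by ring_nf
      _ = _ := by rw [cosh_two_mul, cosh_sq]; ring
  rw [hseam, hcosh]
  field_simp
  ring

lemma cosh_mul_cosh_mul_cosh_sub_sinh_mul_sinh (σ a b : ℝ) :
    cosh σ * cosh a * cosh b - sinh a * sinh b
      = (cosh (a + b) * (cosh σ - 1) + cosh (b - a) * (cosh σ + 1)) / 2 := by
  rw [cosh_add, cosh_sub]
  ring

noncomputable def twistCosh (L c : ℝ) : ℝ :=
  cosh c * (3 - cosh (seam L c)) / (cosh (seam L c) + 1)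

lemma ellBeta_eq_two_mul_iff (L : ℝ) {c : ℝ} (hc : 0 ≤ c) (t : ℝ) :
    ellBeta L c t = 2 * c ↔ cosh (c - t) = twistCosh L c := by
  set S := cosh (seam L c)
  have hS : 1 ≤ S := one_le_cosh _
  have harg := cosh_mul_cosh_mul_cosh_sub_sinh_mul_sinh (seam L c) (t / 2) (c - t / 2)
  rw [show t / 2 + (c - t / 2) = c by ring, show c - t / 2 - t / 2 = c - t by ring] at harg
  have hone : 1 ≤ (cosh c * (S - 1) + cosh (c - t) * (S + 1)) / 2 := by
    nlinarith [one_le_cosh c, one_le_cosh (c - t)]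
  rw [ellBeta, harg, mul_right_inj' two_ne_zero, arcosh_eq_iff hone hc, twistCosh,
    eq_div_iff (by positivity)]
  constructor <;> intro h <;> linarith

lemma twistCosh_lt_cosh {L c : ℝ} (hL : L ≠ 0) (hc : c ≠ 0) : twistCosh L c < cosh c := by
  have hS : 1 < cosh (seam L c) := by
    have := cosh_seam_sub_one_mul L hc
    nlinarith [one_lt_cosh.2 hc, sq_pos_of_ne_zero hL]
  rw [twistCosh, div_lt_iff₀ (by positivity)]
  nlinarith [cosh_pos c]

lemma one_le_twistCosh {L c₁ c : ℝ} (hc₁ : 0 < c₁)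
    (heq : cosh c₁ = 2 * L ^ 2 + cosh (seam L c₁)) (hc : c₁ ≤ c) : 1 ≤ twistCosh L c := by
  have hc₀ : 0 < c := hc₁.trans_le hc
  set x₁ := cosh c₁ - 1
  set x := cosh c - 1
  set σ := cosh (seam L c) - 1
  have hx₁ : 0 < x₁ := sub_pos.2 (one_lt_cosh.2 hc₁.ne')
  have hx₁x : x₁ ≤ x := by
    simp only [x₁, x, sub_le_sub_iff_right, cosh_le_cosh, abs_of_pos hc₁, abs_of_pos hc₀, hc]
  have hσx : σ * x = 4 * L ^ 2 := cosh_seam_sub_one_mul L hc₀.ne'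
  have hσ₁x₁ := cosh_seam_sub_one_mul L hc₁.ne'
  have hσ₁ : 0 ≤ cosh (seam L c₁) - 1 := sub_nonneg.2 (one_le_cosh _)
  -- `x₁` is the positive root of `X ^ 2 - 2 L ^ 2 X - 4 L ^ 2`, which is therefore `≥ 0` at `x`
  have hroot : x₁ ^ 2 = 2 * L ^ 2 * x₁ + 4 * L ^ 2 := by
    linear_combination x₁ * heq + hσ₁x₁
  have hquad : 2 * L ^ 2 * x + 4 * L ^ 2 ≤ x ^ 2 := by
    nlinarith [mul_nonneg (sub_nonneg.2 hx₁x) (by linarith : 0 ≤ x + x₁ - 2 * L ^ 2)]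
  have hσ : σ * (2 + x) ≤ 2 * x := by
    refine le_of_mul_le_mul_right ?_ (hx₁.trans_le hx₁x)
    nlinarith
  rw [twistCosh, le_div_iff₀ (by positivity)]
  linarith

lemma existsUnique_mem_Ioc_cosh_sub_mul_eq {c R : ℝ} (hc : 0 < c) (hR₁ : 1 ≤ R)
    (hR : R < cosh c) : ∃! u : ℝ, u ∈ Ioc (0 : ℝ) 1 ∧ cosh (c - c * u) = R := by
  have hR₀ : 0 ≤ arcosh R := arcosh_eq_real_arcosh ▸ arcosh_nonneg hR₁
  have hRc : arcosh R < c := by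
    simpa [arcosh_eq_real_arcosh, arcosh_cosh hc.le] using
      (arcosh_lt_arcosh (by linarith) (cosh_pos c)).2 hR
  refine ⟨(c - arcosh R) / c, ⟨⟨by positivity, ?_⟩, ?_⟩, ?_⟩
  · rw [div_le_one hc]
    linarith
  · rw [mul_div_cancel₀ _ hc.ne', sub_sub_cancel]
    exact cosh_arcosh hR₁
  · rintro u ⟨⟨hu₀, hu₁⟩, hu⟩
    have hcu : c - c * u = arcosh R :=
      ((arcosh_eq_iff hR₁ (by nlinarith)).2 hu.symm).symm
    field_simp
    linarith

lemma cos_pi_div_succ_pos {g : ℕ} (hg : 2 ≤ g) : 0 < cos (π / (g + 1)) := by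
  apply cos_pos_of_mem_Ioo
  constructor
  · linarith [show 0 < π / (g + 1) by positivity, pi_pos]
  · have hg₃ : (3 : ℝ) ≤ g + 1 := by norm_cast; omega
    have hle : π / (g + 1) ≤ π / 3 := div_le_div_of_nonneg_left pi_pos.le (by norm_num) hg₃
    linarith [pi_pos]

theorem exists_unique_u1_general (g : ℕ) (hg : 2 ≤ g) (L : ℝ)
    (hL : L = Real.cos (Real.pi / (g + 1))) (c₁ : ℝ) (hc₁ : 0 < c₁)
    (heq : Real.cosh c₁ = 2 * L ^ 2 + Real.cosh (seam L c₁)) :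
    ∀ c : ℝ, c₁ ≤ c →
      ∃! u : ℝ, u ∈ Set.Ioc (0 : ℝ) 1 ∧ ellBeta L c (c * u) = 2 * c := by
  intro c hc
  have hc₀ : 0 < c := hc₁.trans_le hc
  have hL₀ : L ≠ 0 := hL ▸ (cos_pi_div_succ_pos hg).ne'
  simp only [ellBeta_eq_two_mul_iff L hc₀.le]
  exact existsUnique_mem_Ioc_cosh_sub_mul_eq hc₀ (one_le_twistCosh hc₁ heq hc)
    (twistCosh_lt_cosh hL₀ hc₀.ne')

/-- Fix an integer `g ≥ 2`, set `L = cos(π/(g+1))`, for `c > 0` let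
`s(c) = 2·arsinh(L/sinh(c/2))`, and let `c₁ > 0` be the unique solution of
`cosh(c₁) = 2L² + cosh(s(c₁))`. Then for every `c ≥ c₁` there exists a unique
`u ∈ (0,1]` such that `ℓ_β(c, c·u) = 2c`. -/
theorem exists_unique_u1 (g : ℕ) (hg : 2 ≤ g) (L : ℝ)
    (hL : L = Real.cos (Real.pi / (g + 1))) (c₁ : ℝ) (hc₁ : 0 < c₁)
    (heq : Real.cosh c₁ = 2 * L ^ 2 + Real.cosh (seam L c₁))
    (huniq : ∀ c : ℝ, 0 < c → Real.cosh c = 2 * L ^ 2 + Real.cosh (seam L c) → c = c₁) :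
    ∀ c : ℝ, c₁ ≤ c →
      ∃! u : ℝ, u ∈ Set.Ioc (0 : ℝ) 1 ∧ ellBeta L c (c * u) = 2 * c :=
  exists_unique_u1_general g hg L hL c₁ hc₁ heq
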